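/- arXiv:2007.11863 — 4 statements merged into one kernel-verified Lean document; each statement's English description precedes it below -/
import Mathlib

section
/- Let G be a finite simple graph, let T be a subset of its vertices, and let J be a subset of the edge set of G of minimum cardinality with the property that the set of vertices incident to an odd number of edges of J is exactly T. Then for any three pairwise adjacent vertices a, b, c of G, the set J contains at most one of the three edges ab, bc, ca. -/
private lemma symm_card_aux {α : Type*} [DecidableEq α] (A B : Finset α) :
    ((A \ B) ∪ (B \ A)).card + (A ∩ B).card + (B ∩ A).card = A.card + B.card := by
  rw [Finset.card_union_of_disjoint (disjoint_sdiff_sdiff)]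
  have h1 := Finset.card_sdiff_add_card_inter A B
  have h2 := Finset.card_sdiff_add_card_inter B A
  omega

private lemma filter_symm_aux {α : Type*} [DecidableEq α] (A B : Finset α)
    (p : α → Prop) [DecidablePred p] :
    ((A \ B) ∪ (B \ A)).filter p
      = ((A.filter p) \ (B.filter p)) ∪ ((B.filter p) \ (A.filter p)) := by
  ext e
  simp only [Finset.mem_filter, Finset.mem_union, Finset.mem_sdiff]
  tauto

/-- Let `G` be a finite simple graph, `T` a subset of its vertices, and
`J` a subset of the edge set of `G` of minimum cardinality such that the set of
vertices incident to an odd number of edges of `J` is exactly `T` (a minimum `T`-join).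
Then for any three pairwise adjacent vertices `a, b, c` of `G`, the set `J` contains
at most one of the three edges `ab`, `bc`, `ca`. -/
theorem stmt_3 {V : Type*} [Fintype V] [DecidableEq V]
    (G : SimpleGraph V) [DecidableRel G.Adj]
    (T : Set V) (J : Finset (Sym2 V))
    (hJG : J ⊆ G.edgeFinset)
    (hJT : {v : V | Odd ((J.filter fun e => v ∈ e).card)} = T)
    (hmin : ∀ J' : Finset (Sym2 V), J' ⊆ G.edgeFinset →
      {v : V | Odd ((J'.filter fun e => v ∈ e).card)} = T → J.card ≤ J'.card)
    (a b c : V) (hab : G.Adj a b) (hbc : G.Adj b c) (hca : G.Adj c a) :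
    (({s(a, b), s(b, c), s(c, a)} : Finset (Sym2 V)) ∩ J).card ≤ 1 := by
  by_contra h
  push_neg at h
  set S : Finset (Sym2 V) := {s(a, b), s(b, c), s(c, a)} with hS
  have hab' : a ≠ b := hab.ne
  have hbc' : b ≠ c := hbc.ne
  have hca' : c ≠ a := hca.ne
  -- S has exactly 3 elements and all its edges are in G
  have hSsub : S ⊆ G.edgeFinset := by
    intro e he
    simp only [hS, Finset.mem_insert, Finset.mem_singleton] at he
    rcases he with rfl | rfl | rfl <;>
      simp [SimpleGraph.mem_edgeFinset, hab, hbc, hca]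
  have hScard : S.card ≤ 3 := by
    apply le_trans (Finset.card_insert_le _ _)
    have := Finset.card_insert_le (s(b,c)) ({s(c,a)} : Finset (Sym2 V))
    simp at this ⊢
    omega
  -- Even number of edges of S through each vertex
  have hSeven : ∀ v : V, Even ((S.filter fun e => v ∈ e).card) := by
    intro v
    have e12 : s(a, b) ≠ s(b, c) := by
      simp [Sym2.eq_iff]; tauto
    have e13 : s(a, b) ≠ s(c, a) := by
      simp [Sym2.eq_iff]; tauto
    have e23 : s(b, c) ≠ s(c, a) := by
      simp [Sym2.eq_iff]; tauto
    by_cases hva : v = a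
    · subst hva
      have : S.filter (fun e => v ∈ e) = {s(v, b), s(c, v)} := by
        ext e
        simp only [hS, Finset.mem_filter, Finset.mem_insert, Finset.mem_singleton,
          Sym2.mem_iff]
        constructor
        · rintro ⟨rfl | rfl | rfl, hm⟩ <;> simp_all <;> tauto
        · rintro (rfl | rfl) <;> simp_all
      rw [this, Finset.card_insert_of_notMem (by simpa using e13.symm ∘ Eq.symm ∘ id),
        Finset.card_singleton]
      decide
    · by_cases hvb : v = b
      · subst hvb
        have : S.filter (fun e => v ∈ e) = {s(a, v), s(v, c)} := by
          ext e
          simp only [hS, Finset.mem_filter, Finset.mem_insert, Finset.mem_singleton,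
            Sym2.mem_iff]
          constructor
          · rintro ⟨rfl | rfl | rfl, hm⟩ <;> simp_all <;> tauto
          · rintro (rfl | rfl) <;> simp_all
        rw [this, Finset.card_insert_of_notMem (by simpa using e12),
          Finset.card_singleton]
        decide
      · by_cases hvc : v = c
        · subst hvc
          have : S.filter (fun e => v ∈ e) = {s(b, v), s(v, a)} := by
            ext e
            simp only [hS, Finset.mem_filter, Finset.mem_insert, Finset.mem_singleton,
              Sym2.mem_iff]
            constructor
            · rintro ⟨rfl | rfl | rfl, hm⟩ <;> simp_all <;> tauto
            · rintro (rfl | rfl) <;> simp_all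
          rw [this, Finset.card_insert_of_notMem (by simpa using e23),
            Finset.card_singleton]
          decide
        · have : S.filter (fun e => v ∈ e) = ∅ := by
            ext e
            simp only [hS, Finset.mem_filter, Finset.mem_insert, Finset.mem_singleton,
              Sym2.mem_iff, Finset.notMem_empty, iff_false, not_and]
            rintro (rfl | rfl | rfl) <;> simp_all <;> tauto
          rw [this]; simp
  -- the modified T-join
  set J' : Finset (Sym2 V) := (J \ S) ∪ (S \ J) with hJ'
  have hJ'sub : J' ⊆ G.edgeFinset := by
    intro e he
    rw [hJ', Finset.mem_union, Finset.mem_sdiff, Finset.mem_sdiff] at he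
    rcases he with ⟨he, _⟩ | ⟨he, _⟩
    · exact hJG he
    · exact hSsub he
  have hJ'T : {v : V | Odd ((J'.filter fun e => v ∈ e).card)} = T := by
    rw [← hJT]
    ext v
    simp only [Set.mem_setOf_eq]
    rw [hJ', filter_symm_aux]
    have key := symm_card_aux (J.filter fun e => v ∈ e) (S.filter fun e => v ∈ e)
    have hev := hSeven v
    rcases hev with ⟨k, hk⟩
    have hint2 : ((J.filter fun e => v ∈ e) ∩ (S.filter fun e => v ∈ e)).card
        = ((S.filter fun e => v ∈ e) ∩ (J.filter fun e => v ∈ e)).card := by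
      rw [Finset.inter_comm]
    rw [Nat.odd_iff, Nat.odd_iff]
    omega
  have hle := hmin J' hJ'sub hJ'T
  have key := symm_card_aux J S
  have hint : (J ∩ S).card = (S ∩ J).card := by rw [Finset.inter_comm]
  have h2 : 2 ≤ (S ∩ J).card := h
  rw [← hJ'] at key
  omega
end

section
/- For every even n ≥ 2, the edge set of the complete graph on Fin n can be partitioned into n/2 paths, each visiting all n vertices (Hamiltonian paths), such that the edge set of each path consists of pairwise non-crossing chords. -/
/-- `x` lies strictly inside the open clockwise arc from `a` to `b` on the convex
`n`-gon whose vertices are `Fin n` in clockwise cyclic order. -/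
def InArc (n : ℕ) (a b x : Fin n) : Prop :=
  0 < (x - a).val ∧ (x - a).val < (b - a).val

/-- Two chords of the convex `n`-gon cross: their four endpoints are distinct and
interleave in the cyclic order, i.e. one endpoint of the second chord lies strictly
inside each of the two open arcs determined by the first chord. -/
def Cross (n : ℕ) (e f : Sym2 (Fin n)) : Prop :=
  ∃ a b c d : Fin n, e = s(a, b) ∧ f = s(c, d) ∧ InArc n a b c ∧ InArc n b a d


/-- The edge set of the Hamiltonian path on `Fin n` that visits the vertices in the
order `σ 0, σ 1, …, σ (n-1)`: the chords joining consecutive vertices of the path. -/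
def PathEdges (n : ℕ) (σ : Fin n ≃ Fin n) : Set (Sym2 (Fin n)) :=
  {e | ∃ (j : ℕ) (h : j + 1 < n), e = s(σ ⟨j, Nat.lt_of_succ_lt h⟩, σ ⟨j + 1, h⟩)}

/-!
The path `c, c + 1, c - 1, c + 2, c - 2, …` on `ℤ/n` uses exactly the chords `{a, b}` with
`a + b ∈ {2c, 2c + 1}`. The endpoint sums of two crossing chords differ by some `m` with
`2 ≤ m ≤ n - 2`, so no two chords of such a path cross. For even `n` the pairs `{2c, 2c + 1}`,
`0 ≤ c < n / 2`, partition `ℤ/n`, so these `n / 2` paths partition the chords.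
-/

/-- The order `0, n - 1, 1, n - 2, 2, …`, in which consecutive entries sum to `n - 1` or `n`. -/
def zigzag (n j : ℕ) : ℕ := if j % 2 = 0 then j / 2 else n - (j + 1) / 2

variable {n : ℕ}

lemma zigzag_lt {j : ℕ} (hj : j < n) : zigzag n j < n := by
  unfold zigzag; split_ifs <;> omega

lemma zigzag_injOn : Set.InjOn (zigzag n) (Set.Iio n) := fun j hj j' hj' h => by
  simp only [Set.mem_Iio] at hj hj'
  unfold zigzag at h
  split_ifs at h <;> omega

lemma exists_mk_eq_zigzag_iff {k l : ℕ} (hk : k < n) (hl : l < n) :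
    (∃ j, j + 1 < n ∧ s(k, l) = s(zigzag n j, zigzag n (j + 1))) ↔
      k ≠ l ∧ (k + l = n ∨ k + l + 1 = n) := by
  simp only [Sym2.eq_iff]
  constructor
  · rintro ⟨j, hj, h | h⟩ <;> unfold zigzag at h <;> split_ifs at h <;> omega
  · rintro ⟨hkl, h⟩
    refine ⟨if k + l = n then 2 * min k l - 1 else 2 * min k l, by split_ifs <;> omega, ?_⟩
    unfold zigzag
    split_ifs <;> omega

noncomputable def zigzagEquiv (n : ℕ) : Fin n ≃ Fin n :=
  Equiv.ofBijective (fun j => ⟨zigzag n j, zigzag_lt j.isLt⟩) <|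
    Finite.injective_iff_bijective.mp fun j j' h =>
      Fin.ext (zigzag_injOn j.isLt j'.isLt (Fin.val_eq_of_eq h))

def chordSum : Sym2 (Fin n) → Fin n := Sym2.lift ⟨(· + ·), add_comm⟩

@[simp]
lemma chordSum_mk (a b : Fin n) : chordSum s(a, b) = a + b := rfl

section
open Fin.CommRing

variable [NeZero n]

lemma Fin.natCast_eq_zero_iff_of_lt_two_mul {m : ℕ} (hm : m < 2 * n) :
    (m : Fin n) = 0 ↔ m = 0 ∨ m = n := by
  rw [Fin.natCast_eq_zero]
  refine ⟨fun h => or_iff_not_imp_left.mpr fun h0 => Nat.eq_of_dvd_of_lt_two_mul h0 h hm, ?_⟩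
  rintro (rfl | rfl) <;> simp

lemma Fin.eq_natCast_iff {v : Fin n} {m : ℕ} (hm : m < n) : v = m ↔ v.val = m := by
  rw [Fin.ext_iff, Fin.val_natCast, Nat.mod_eq_of_lt hm]

lemma Fin.val_sub_add_val_sub {a b : Fin n} (hab : a ≠ b) : (a - b).val + (b - a).val = n := by
  have hsum : (((a - b).val + (b - a).val : ℕ) : Fin n) = 0 := by
    push_cast
    simp
  have hpos : (a - b).val ≠ 0 := fun h => hab (sub_eq_zero.mp (Fin.ext h))
  have := (a - b).isLt
  have := (b - a).isLt
  rcases (Fin.natCast_eq_zero_iff_of_lt_two_mul (by omega)).mp hsum with h | h <;> omega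

lemma Fin.val_add_val_eq_iff_of_ne {x y : Fin n} (hxy : x ≠ y) :
    (x.val + y.val = n ∨ x.val + y.val + 1 = n) ↔ (x + y = 0 ∨ x + y + 1 = 0) := by
  have hx := x.isLt
  have hy := y.isLt
  have hne : x.val ≠ y.val := Fin.val_ne_of_ne hxy
  have h1 : x + y + 1 = ((x.val + y.val + 1 : ℕ) : Fin n) := by push_cast; simp
  have h0 : x + y = ((x.val + y.val : ℕ) : Fin n) := by push_cast; simp
  rw [h1, h0, natCast_eq_zero_iff_of_lt_two_mul (by omega),
    natCast_eq_zero_iff_of_lt_two_mul (by omega)]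
  omega

/-- The path `c, c + 1, c - 1, c + 2, c - 2, …`. -/
noncomputable def zigzagPath (c : Fin n) : Fin n ≃ Fin n := (zigzagEquiv n).trans (Equiv.subLeft c)

@[simp]
lemma zigzagPath_apply (c j : Fin n) : zigzagPath c j = c - ⟨zigzag n j, zigzag_lt j.isLt⟩ := rfl

lemma mk_eq_sub_mk_sub_iff (c a b x y : Fin n) :
    s(a, b) = s(c - x, c - y) ↔ s((c - a).val, (c - b).val) = s(x.val, y.val) := by
  have h : ∀ u v : Fin n, u = c - v ↔ c - u = v := fun u v =>
    ⟨fun h => by rw [h, sub_sub_cancel], fun h => by rw [← h, sub_sub_cancel]⟩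
  simp only [Sym2.eq_iff, Fin.val_inj, h]

lemma mk_mem_pathEdges_zigzagPath_iff (c a b : Fin n) :
    s(a, b) ∈ PathEdges n (zigzagPath c) ↔ a ≠ b ∧ (a + b = c + c ∨ a + b = c + c + 1) := by
  have key : s(a, b) ∈ PathEdges n (zigzagPath c) ↔
      ∃ j, j + 1 < n ∧ s((c - a).val, (c - b).val) = s(zigzag n j, zigzag n (j + 1)) := by
    simp only [PathEdges, Set.mem_ofPred_eq, zigzagPath_apply, mk_eq_sub_mk_sub_iff, exists_prop]
  rw [key, exists_mk_eq_zigzag_iff (c - a).isLt (c - b).isLt, Ne, Fin.val_inj, sub_right_inj]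
  refine and_congr_right fun hab => ?_
  have h0 : c - a + (c - b) = c + c - (a + b) := by abel
  have h1 : c - a + (c - b) + 1 = c + c + 1 - (a + b) := by abel
  rw [Fin.val_add_val_eq_iff_of_ne (mt sub_right_inj.mp hab), h1, h0, sub_eq_zero, sub_eq_zero,
    eq_comm, @eq_comm _ (c + c + 1)]

lemma Cross.exists_chordSum_eq_add {e f : Sym2 (Fin n)} (h : Cross n e f) :
    ∃ m : ℕ, 2 ≤ m ∧ m + 2 ≤ n ∧ chordSum f = chordSum e + m := by
  obtain ⟨a, b, c, d, rfl, rfl, ⟨hc₀, hc₁⟩, ⟨hd₀, hd₁⟩⟩ := h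
  have hab : b ≠ a := fun h => by simp [h] at hc₁
  have := Fin.val_sub_add_val_sub hab
  refine ⟨(c - a).val + (d - b).val, by omega, by omega, ?_⟩
  push_cast
  simp only [chordSum_mk]
  abel

lemma not_cross_of_chordSum {s : Fin n} {e f : Sym2 (Fin n)}
    (he : chordSum e = s ∨ chordSum e = s + 1) (hf : chordSum f = s ∨ chordSum f = s + 1) :
    ¬ Cross n e f := by
  intro hcross
  obtain ⟨m, hm₂, hmn, hsum⟩ := hcross.exists_chordSum_eq_add
  have hzero : ∀ k : ℕ, k < 2 * n → (k : Fin n) = 0 → k = 0 ∨ k = n := fun k hk =>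
    (Fin.natCast_eq_zero_iff_of_lt_two_mul hk).mp
  rcases he with he | he <;> rcases hf with hf | hf <;> rw [he, hf] at hsum
  · have := hzero m (by omega) (by linear_combination -hsum)
    omega
  · have := hzero (m - 1) (by omega) (by push_cast [show 1 ≤ m by omega]; linear_combination -hsum)
    omega
  · have := hzero (m + 1) (by omega) (by push_cast; linear_combination -hsum)
    omega
  · have := hzero m (by omega) (by linear_combination -hsum)
    omega

lemma chordSum_of_mem_pathEdges_zigzagPath {c : Fin n} {e : Sym2 (Fin n)}
    (he : e ∈ PathEdges n (zigzagPath c)) : chordSum e = c + c ∨ chordSum e = c + c + 1 := by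
  induction e using Sym2.ind with
  | h a b => exact ((mk_mem_pathEdges_zigzagPath_iff c a b).mp he).2

lemma zigzagPath_not_cross (c : Fin n) :
    ∀ e ∈ PathEdges n (zigzagPath c), ∀ f ∈ PathEdges n (zigzagPath c), ¬ Cross n e f :=
  fun _ he _ hf => not_cross_of_chordSum (chordSum_of_mem_pathEdges_zigzagPath he)
    (chordSum_of_mem_pathEdges_zigzagPath hf)

variable (n) in
noncomputable def zigzagPaths (i : Fin (n / 2)) : Fin n ≃ Fin n := zigzagPath (i.val : Fin n)

lemma existsUnique_mem_pathEdges_zigzagPaths (heven : Even n) {a b : Fin n} (hab : a ≠ b) :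
    ∃! i, s(a, b) ∈ PathEdges n (zigzagPaths n i) := by
  simp only [zigzagPaths, mk_mem_pathEdges_zigzagPath_iff, ne_eq, hab, not_false_eq_true,
    true_and]
  have hn := Nat.even_iff.mp heven
  have hv := (a + b).isLt
  have key : ∀ i : Fin (n / 2),
      (a + b = (i.val : Fin n) + i.val ∨ a + b = i.val + i.val + 1) ↔ (a + b).val / 2 = i.val := by
    intro i
    have := i.isLt
    rw [← Nat.cast_add, ← Nat.cast_add_one, Fin.eq_natCast_iff (by omega),
      Fin.eq_natCast_iff (by omega)]
    omega
  exact ⟨⟨(a + b).val / 2, by omega⟩, (key _).mpr rfl, fun i hi => Fin.ext ((key i).mp hi).symm⟩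

end

/-- For every even `n ≥ 2`, the edge set of the complete graph on `Fin n`
(the `n` points in convex position) can be partitioned into `n / 2` Hamiltonian paths,
each of whose edge sets consists of pairwise non-crossing chords.  Each path is given
by the order `σ i` in which it visits the `n` vertices; the partition property says
that every chord belongs to the edge set of exactly one of the paths. -/
theorem stmt_4 (n : ℕ) (hn : 2 ≤ n) (heven : Even n) :
    ∃ σ : Fin (n / 2) → (Fin n ≃ Fin n),
      (∀ i : Fin (n / 2), ∀ e ∈ PathEdges n (σ i), ∀ f ∈ PathEdges n (σ i),
        ¬ Cross n e f) ∧
      (∀ a b : Fin n, a ≠ b → ∃! i : Fin (n / 2), s(a, b) ∈ PathEdges n (σ i)) := by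
  have : NeZero n := ⟨by omega⟩
  exact ⟨zigzagPaths n, fun i => zigzagPath_not_cross _,
    fun a b hab => existsUnique_mem_pathEdges_zigzagPaths heven hab⟩
end

section
/- For every n ≥ 3, any set of pairwise non-crossing diagonals of the convex n-gon has at most n − 3 elements. -/
/-- A boundary edge of the convex `n`-gon: a chord of the form `{i, i+1 (mod n)}`. -/
def IsBoundaryEdge (n : ℕ) (e : Sym2 (Fin n)) : Prop :=
  ∃ i j : Fin n, e = s(i, j) ∧ (j - i).val = 1

/-- A diagonal of the convex `n`-gon: a chord (pair of distinct vertices) that is not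
a boundary edge. -/
def IsDiagonal (n : ℕ) (e : Sym2 (Fin n)) : Prop :=
  ¬ e.IsDiag ∧ ¬ IsBoundaryEdge n e

/-!
Cut the polygon open at vertex `0`: a chord `{a, b}` with `a < b` becomes the interval
`[a, b]` of `{0, …, n - 1}`, a diagonal becomes an interval of length at least `2` other
than `[0, n - 1]`, and non-crossing chords become intervals that are nested or have disjoint
interiors. For such a family on `{0, …, m}`, take a shortest interval `[a, b]`: no endpoint
of another interval lies strictly inside it, so collapsing `[a, b]` to a single edge removes
it, keeps the rest of the family valid on `{0, …, m - (b - a - 1)}`, and induction gives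
at most `m - 2` intervals.
-/

/-- `I` encodes the diagonal `{I.1, I.2}` of the polygon with vertices `0, 1, …, m` in order. -/
def IsDiagonalInterval (m : ℕ) (I : ℕ × ℕ) : Prop :=
  I.1 + 2 ≤ I.2 ∧ I.2 ≤ m ∧ I ≠ (0, m)

def IntervalsCross (I J : ℕ × ℕ) : Prop :=
  I.1 < J.1 ∧ J.1 < I.2 ∧ I.2 < J.2

/-- Collapses `[a, b]` to the edge `[a, a + 1]`; meaningful only outside `Set.Ioo a b`. -/
def collapse (a b x : ℕ) : ℕ :=
  if x ≤ a then x else x - (b - a - 1)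

section Collapse

variable {a b : ℕ}

lemma strictMonoOn_collapse (hab : a < b) : StrictMonoOn (collapse a b) (Set.Ioo a b)ᶜ := by
  intro x hx y hy hxy
  simp only [Set.mem_compl_iff, Set.mem_Ioo, not_and_or, not_lt] at hx hy
  unfold collapse
  split_ifs <;> omega

lemma intervalsCross_of_intervalsCross_collapse (hab : a < b) {I J : ℕ × ℕ}
    (hI : I ∈ (Set.Ioo a b)ᶜ ×ˢ (Set.Ioo a b)ᶜ) (hJ : J ∈ (Set.Ioo a b)ᶜ ×ˢ (Set.Ioo a b)ᶜ)
    (h : IntervalsCross (Prod.map (collapse a b) (collapse a b) I)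
      (Prod.map (collapse a b) (collapse a b) J)) :
    IntervalsCross I J := by
  have hmono := strictMonoOn_collapse hab
  obtain ⟨h1, h2, h3⟩ := h
  exact ⟨(hmono.lt_iff_lt hI.1 hJ.1).1 h1, (hmono.lt_iff_lt hJ.1 hI.2).1 h2,
    (hmono.lt_iff_lt hI.2 hJ.2).1 h3⟩

lemma isDiagonalInterval_collapse {m : ℕ} (hab : IsDiagonalInterval m (a, b)) {J : ℕ × ℕ}
    (hJ : IsDiagonalInterval m J) (hJab : J ≠ (a, b))
    (hout : J ∈ (Set.Ioo a b)ᶜ ×ˢ (Set.Ioo a b)ᶜ) :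
    IsDiagonalInterval (m - (b - a - 1)) (Prod.map (collapse a b) (collapse a b) J) := by
  obtain ⟨p, q⟩ := J
  obtain ⟨hab2, hbm, hab0⟩ := hab
  obtain ⟨hpq, hqm, hpq0⟩ := hJ
  simp only [Set.mem_prod, Set.mem_compl_iff, Set.mem_Ioo, not_and_or, not_lt, ne_eq,
    Prod.mk.injEq] at hab0 hpq0 hJab hout hpq hqm hab2 hbm
  simp only [IsDiagonalInterval, Prod.map, collapse, ne_eq, Prod.mk.injEq]
  split_ifs <;> omega

lemma mem_compl_Ioo_prod_of_shortest {F : Finset (ℕ × ℕ)}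
    (hF : ∀ I ∈ F, ∀ J ∈ F, ¬ IntervalsCross I J) (hlen : ∀ I ∈ F, I.1 + 2 ≤ I.2)
    (hab : (a, b) ∈ F) (hmin : ∀ J ∈ F, b - a ≤ J.2 - J.1) {J : ℕ × ℕ} (hJ : J ∈ F) :
    J ∈ (Set.Ioo a b)ᶜ ×ˢ (Set.Ioo a b)ᶜ := by
  have hJlen := hlen J hJ
  have hJmin := hmin J hJ
  simp only [Set.mem_prod, Set.mem_compl_iff, Set.mem_Ioo]
  constructor
  · rintro ⟨h1, h2⟩
    exact hF (a, b) hab J hJ ⟨h1, h2, by omega⟩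
  · rintro ⟨h1, h2⟩
    exact hF J hJ (a, b) hab ⟨by omega, h1, h2⟩

end Collapse

theorem card_le_of_isDiagonalInterval_of_not_intervalsCross (F : Finset (ℕ × ℕ)) (m : ℕ)
    (hdiag : ∀ I ∈ F, IsDiagonalInterval m I)
    (hF : ∀ I ∈ F, ∀ J ∈ F, ¬ IntervalsCross I J) :
    F.card ≤ m - 2 := by
  induction hk : F.card using Nat.strong_induction_on generalizing F m with
  | _ k ih =>
  subst hk
  rcases F.eq_empty_or_nonempty with rfl | hne
  · simp
  obtain ⟨⟨a, b⟩, hab, hmin⟩ := F.exists_min_image (fun I => I.2 - I.1) hne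
  obtain ⟨hab2, hbm, hab0⟩ := hdiag _ hab
  simp only [ne_eq, Prod.mk.injEq] at hab2 hbm hab0
  have hout : ∀ J ∈ F.erase (a, b), J ∈ (Set.Ioo a b)ᶜ ×ˢ (Set.Ioo a b)ᶜ := fun J hJ =>
    mem_compl_Ioo_prod_of_shortest hF (fun I hI => (hdiag I hI).1) hab hmin
      (Finset.mem_of_mem_erase hJ)
  have hmono := strictMonoOn_collapse (a := a) (b := b) (by omega)
  set G := (F.erase (a, b)).image (Prod.map (collapse a b) (collapse a b))
  have hcardG : G.card = F.card - 1 := by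
    rw [← Finset.card_erase_of_mem hab]
    exact Finset.card_image_of_injOn ((hmono.injOn.prodMap hmono.injOn).mono hout)
  have hdiagG : ∀ I ∈ G, IsDiagonalInterval (m - (b - a - 1)) I := by
    simp only [G, Finset.mem_image]
    rintro _ ⟨J, hJ, rfl⟩
    exact isDiagonalInterval_collapse (hdiag _ hab) (hdiag J (Finset.mem_of_mem_erase hJ))
      (Finset.ne_of_mem_erase hJ) (hout J hJ)
  have hG : ∀ I ∈ G, ∀ J ∈ G, ¬ IntervalsCross I J := by
    simp only [G, Finset.mem_image]
    rintro _ ⟨I, hI, rfl⟩ _ ⟨J, hJ, rfl⟩ h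
    exact hF I (Finset.mem_of_mem_erase hI) J (Finset.mem_of_mem_erase hJ)
      (intervalsCross_of_intervalsCross_collapse (by omega) (hout I hI) (hout J hJ) h)
  have hGbound := ih G.card (by have := hne.card_pos; omega) G (m - (b - a - 1)) hdiagG hG rfl
  omega

lemma Sym2.mk_inf_sup {α : Type*} [LinearOrder α] (e : Sym2 α) : s(e.inf, e.sup) = e :=
  Sym2.sortEquiv.symm_apply_apply e

section Polygon

variable {n : ℕ}

def chordInterval (e : Sym2 (Fin n)) : ℕ × ℕ := (e.inf.val, e.sup.val)

lemma chordInterval_injective : Function.Injective (chordInterval (n := n)) := by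
  intro e f h
  simp only [chordInterval, Prod.mk.injEq] at h
  exact Sym2.inf_eq_inf_and_sup_eq_sup.1 ⟨Fin.ext h.1, Fin.ext h.2⟩

lemma isDiagonalInterval_chordInterval {e : Sym2 (Fin n)} (he : IsDiagonal n e) :
    IsDiagonalInterval (n - 1) (chordInterval e) := by
  obtain ⟨hnd, hnb⟩ := he
  rw [← Sym2.mk_inf_sup e, Sym2.mk_isDiag_iff] at hnd
  have hlt : e.inf < e.sup := lt_of_le_of_ne e.inf_le_sup hnd
  have hfwd : (e.sup - e.inf).val ≠ 1 := fun h => hnb ⟨_, _, (Sym2.mk_inf_sup e).symm, h⟩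
  have hbwd : (e.inf - e.sup).val ≠ 1 := fun h =>
    hnb ⟨_, _, by rw [Sym2.eq_swap, Sym2.mk_inf_sup], h⟩
  rw [Fin.sub_val_of_le hlt.le] at hfwd
  rw [Fin.coe_sub_iff_lt.2 hlt] at hbwd
  have := e.sup.isLt
  simp only [IsDiagonalInterval, chordInterval, ne_eq, Prod.mk.injEq]
  omega

lemma cross_of_intervalsCross {e f : Sym2 (Fin n)}
    (h : IntervalsCross (chordInterval e) (chordInterval f)) : Cross n e f := by
  obtain ⟨h1, h2, h3⟩ := h
  simp only [chordInterval] at h1 h2 h3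
  refine ⟨e.inf, e.sup, f.inf, f.sup, (Sym2.mk_inf_sup e).symm, (Sym2.mk_inf_sup f).symm,
    ?_, ?_⟩
  · rw [InArc, Fin.sub_val_of_le h1.le, Fin.sub_val_of_le (h1.trans h2).le]
    omega
  · rw [InArc, Fin.sub_val_of_le h3.le, Fin.coe_sub_iff_lt.2 (h1.trans h2)]
    have := f.sup.isLt
    omega

end Polygon

theorem stmt_7_general (n : ℕ) (D : Finset (Sym2 (Fin n)))
    (hdiag : ∀ e ∈ D, IsDiagonal n e)
    (hcross : ∀ e ∈ D, ∀ f ∈ D, ¬ Cross n e f) :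
    D.card ≤ n - 3 := by
  have hbound := card_le_of_isDiagonalInterval_of_not_intervalsCross (D.image chordInterval)
    (n - 1) (by simpa using fun e he => isDiagonalInterval_chordInterval (hdiag e he))
    (by simpa using fun e he f hf h => hcross e he f hf (cross_of_intervalsCross h))
  rw [Finset.card_image_of_injective D chordInterval_injective] at hbound
  omega

/-- For every `n ≥ 3`, any set of pairwise non-crossing diagonals of the
convex `n`-gon has at most `n - 3` elements. -/
theorem stmt_7 (n : ℕ) (hn : 3 ≤ n) (D : Finset (Sym2 (Fin n)))
    (hdiag : ∀ e ∈ D, IsDiagonal n e)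
    (hcross : ∀ e ∈ D, ∀ f ∈ D, ¬ Cross n e f) :
    D.card ≤ n - 3 :=
  stmt_7_general n D hdiag hcross
end

section
/- Let G be a maximal outerplane graph on Fin n with red vertex set R of even cardinality. If G contains a blue diagonal, then G is augmentable to meet R. -/
/-- A maximal outerplane graph (MOP) on `Fin n` (`n ≥ 3`): a simple graph whose edge
set consists of all `n` boundary edges together with `n - 3` pairwise non-crossing
diagonals. -/
def IsMOP (n : ℕ) (G : SimpleGraph (Fin n)) : Prop :=
  3 ≤ n ∧
  (∀ e, IsBoundaryEdge n e → e ∈ G.edgeSet) ∧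
  (∀ e ∈ G.edgeSet, IsBoundaryEdge n e ∨ IsDiagonal n e) ∧
  (∀ e ∈ G.edgeSet, ∀ f ∈ G.edgeSet, ¬ Cross n e f) ∧
  {e ∈ G.edgeSet | IsDiagonal n e}.ncard = n - 3

/-- `G` is (topologically) augmentable to meet the parity constraints with red set `R`:
there is a simple graph `H` on `Fin n`, edge-disjoint from `G`, whose edges are
pairwise non-crossing chords, in which every red vertex has odd degree and every blue
vertex has even degree. -/
def Augmentable (n : ℕ) (G : SimpleGraph (Fin n)) (R : Set (Fin n)) : Prop :=
  ∃ H : SimpleGraph (Fin n),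
    (∀ e ∈ H.edgeSet, e ∉ G.edgeSet) ∧
    (∀ e ∈ H.edgeSet, ∀ f ∈ H.edgeSet, ¬ Cross n e f) ∧
    (∀ v : Fin n, v ∈ R ↔ Odd ((H.neighborSet v).ncard))

/-- Condition (i): `G` has a blue diagonal (both endpoints blue, i.e. not in `R`). -/
def HasBlueDiagonal (n : ℕ) (G : SimpleGraph (Fin n)) (R : Set (Fin n)) : Prop :=
  ∃ e ∈ G.edgeSet, IsDiagonal n e ∧ ∀ v ∈ e, v ∉ R

/-!
Let `ab` be the blue diagonal. A chord joining a vertex of the open arc `(a, b)` to `b + 1`, or a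
vertex of the open arc `(b, a)` to `a + 1`, crosses `ab`, so it is not an edge of `G`; and no two
such chords cross. Join every red vertex other than `a + 1`, `b + 1` to whichever of `a + 1`,
`b + 1` lies across `ab`. Every vertex other than `a + 1`, `b + 1` then has the right degree
parity; adding the chord `(a + 1)(b + 1)` if needed repairs `a + 1`, and then `b + 1` is right
as well, because both `R` and the set of odd-degree vertices have even size.
-/

theorem Set.mem_of_even_ncard_of_forall_ne_mem_iff {α : Type*} [Finite α] {s t : Set α} {y : α}
    (hs : Even s.ncard) (ht : Even t.ncard) (h : ∀ v ≠ y, v ∈ s ↔ v ∈ t) (hy : y ∈ s) :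
    y ∈ t := by
  by_contra hyt
  have hts : t = s \ {y} := by
    ext v
    by_cases hv : v = y
    · simp [hv, hyt]
    · simp [hv, h v hv]
  have hcard := Set.ncard_sdiff_singleton_add_one hy
  rw [← hts] at hcard
  rw [← hcard, Nat.even_add_one] at hs
  exact hs ht

theorem Set.mem_iff_mem_of_even_ncard {α : Type*} [Finite α] {s t : Set α} {y : α}
    (hs : Even s.ncard) (ht : Even t.ncard) (h : ∀ v ≠ y, v ∈ s ↔ v ∈ t) : y ∈ s ↔ y ∈ t :=
  ⟨mem_of_even_ncard_of_forall_ne_mem_iff hs ht h,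
    mem_of_even_ncard_of_forall_ne_mem_iff ht hs fun v hv ↦ (h v hv).symm⟩

namespace SimpleGraph

variable {V : Type*}

theorem even_ncard_setOf_odd_ncard_neighborSet [Finite V] (H : SimpleGraph V) :
    Even {v | Odd (H.neighborSet v).ncard}.ncard := by
  classical
  have := Fintype.ofFinite V
  convert H.even_card_odd_degree_vertices using 1
  rw [← Set.ncard_coe_finset]
  congr 1
  ext v
  simp [← card_neighborSet_eq_degree, Set.ncard_eq_toFinset_card']

theorem neighborSet_sup_edge_left {H : SimpleGraph V} {x y : V} (hxy : x ≠ y) :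
    (H ⊔ edge x y).neighborSet x = insert y (H.neighborSet x) := by
  ext u
  simp only [mem_neighborSet, sup_adj, edge_adj, Set.mem_insert_iff]
  grind

theorem neighborSet_sup_edge_of_ne {H : SimpleGraph V} {x y v : V} (hx : v ≠ x) (hy : v ≠ y) :
    (H ⊔ edge x y).neighborSet v = H.neighborSet v := by
  ext u
  simp [edge_adj, hx, hy]

theorem exists_le_sup_edge_odd_ncard_neighborSet_iff [Finite V] {H : SimpleGraph V} {R : Set V}
    (hR : Even R.ncard) {x y : V} (hxy : x ≠ y) (hH : ¬ H.Adj x y)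
    (h : ∀ v, v ≠ x → v ≠ y → (v ∈ R ↔ Odd (H.neighborSet v).ncard)) :
    ∃ H' ≤ H ⊔ edge x y, ∀ v, v ∈ R ↔ Odd (H'.neighborSet v).ncard := by
  classical
  set H' := if x ∈ R ↔ Odd (H.neighborSet x).ncard then H else H ⊔ edge x y
  have hle : H' ≤ H ⊔ edge x y := by
    unfold H'; split_ifs
    exacts [le_sup_left, le_rfl]
  have hoff : ∀ v ≠ y, v ∈ R ↔ Odd (H'.neighborSet v).ncard := by
    intro v hvy
    by_cases hvx : v = x
    · subst v
      unfold H'; split_ifs with hx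
      · exact hx
      · rw [neighborSet_sup_edge_left hxy, Set.ncard_insert_of_notMem (s := H.neighborSet x) hH,
          Nat.odd_add_one]
        tauto
    · unfold H'; split_ifs
      · exact h v hvx hvy
      · rw [neighborSet_sup_edge_of_ne hvx hvy]; exact h v hvx hvy
  refine ⟨H', hle, fun v ↦ ?_⟩
  by_cases hvy : v = y
  · subst v
    exact Set.mem_iff_mem_of_even_ncard hR (even_ncard_setOf_odd_ncard_neighborSet H') hoff
  · exact hoff v hvy

end SimpleGraph

def CyclicallyBetween (i j k : ℕ) : Prop :=
  i < j ∧ j < k ∨ j < k ∧ k < i ∨ k < i ∧ i < j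

section Polygon

variable {n : ℕ}

theorem Fin.val_sub_cases (x y : Fin n) :
    (x - y).val = x.val - y.val ∧ y.val ≤ x.val ∨
      (x - y).val = n + x.val - y.val ∧ x.val < y.val := by
  rcases le_or_gt y x with h | h
  · exact .inl ⟨Fin.coe_sub_iff_le.mpr h, h⟩
  · exact .inr ⟨Fin.coe_sub_iff_lt.mpr h, h⟩

theorem cross_mk_iff (u v w z : Fin n) :
    Cross n s(u, v) s(w, z) ↔
      InArc n u v w ∧ InArc n v u z ∨ InArc n u v z ∧ InArc n v u w := by
  constructor
  · rintro ⟨p, q, c, d, he, hf, hc, hd⟩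
    rcases Sym2.eq_iff.mp he with ⟨rfl, rfl⟩ | ⟨rfl, rfl⟩ <;>
      rcases Sym2.eq_iff.mp hf with ⟨rfl, rfl⟩ | ⟨rfl, rfl⟩ <;> tauto
  · rintro (⟨hw, hz⟩ | ⟨hz, hw⟩)
    exacts [⟨u, v, w, z, rfl, rfl, hw, hz⟩, ⟨u, v, z, w, rfl, Sym2.eq_swap, hz, hw⟩]

theorem IsDiagonal.two_le_val_sub {a b : Fin n} (h : IsDiagonal n s(a, b)) :
    2 ≤ (b - a).val ∧ (b - a).val + 2 ≤ n := by
  obtain ⟨hnd, hnb⟩ := h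
  have hab : a.val ≠ b.val := fun h ↦ hnd (Sym2.mk_isDiag_iff.mpr (Fin.ext h))
  have hba : (b - a).val ≠ 1 := fun h ↦ hnb ⟨a, b, rfl, h⟩
  have hab' : (a - b).val ≠ 1 := fun h ↦ hnb ⟨b, a, Sym2.eq_swap, h⟩
  have := a.isLt; have := b.isLt
  rcases Fin.val_sub_cases b a with h | h <;> rcases Fin.val_sub_cases a b with h' | h' <;> omega

variable [NeZero n]

/-- Measured as clockwise offsets from any base point `a`, the cyclic order becomes linear,
so statements about arcs and crossings reduce to linear arithmetic over `ℕ`. -/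
theorem inArc_iff_cyclicallyBetween (a x y z : Fin n) :
    InArc n x y z ↔ CyclicallyBetween (x - a).val (z - a).val (y - a).val := by
  rw [InArc, ← sub_sub_sub_cancel_right z x a, ← sub_sub_sub_cancel_right y x a]
  have := (x - a).isLt; have := (y - a).isLt; have := (z - a).isLt
  rcases Fin.val_sub_cases (z - a) (x - a) with h | h <;>
    rcases Fin.val_sub_cases (y - a) (x - a) with h' | h' <;>
    · unfold CyclicallyBetween; omega

theorem inArc_rev_iff (a b u : Fin n) :
    InArc n b a u ↔ 0 < (b - a).val ∧ (b - a).val < (u - a).val := by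
  simp only [inArc_iff_cyclicallyBetween a, sub_self, Fin.val_zero, CyclicallyBetween]
  have := (u - a).isLt
  omega

def doubleStar (a b : Fin n) : SimpleGraph (Fin n) :=
  SimpleGraph.fromRel fun u v ↦ InArc n a b u ∧ v = b + 1 ∨ InArc n b a u ∧ v = a + 1

theorem Fin.val_add_one_sub {a b : Fin n} (h : (b - a).val + 1 < n) :
    (b + 1 - a).val = (b - a).val + 1 := by
  rw [add_sub_right_comm, Fin.val_add, Fin.val_one', Nat.one_mod_eq_one.mpr (by omega),
    Nat.mod_eq_of_lt h]

theorem Fin.val_add_one_sub_self (a : Fin n) (h : 1 < n) : (a + 1 - a).val = 1 := by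
  rw [add_sub_cancel_left, Fin.val_one', Nat.one_mod_eq_one.mpr (by omega)]

theorem doubleStar_adj_offsets {a b u v : Fin n} (hab : IsDiagonal n s(a, b))
    (huv : (doubleStar a b).Adj u v) :
    ∃ w z, s(u, v) = s(w, z) ∧ 0 < (w - a).val ∧ (w - a).val < (b - a).val ∧
      (b - a).val < (z - a).val ∧ ((w - a).val = 1 ∨ (z - a).val = (b - a).val + 1) := by
  obtain ⟨h2, hn⟩ := hab.two_le_val_sub
  have hx := Fin.val_add_one_sub_self a (by omega)
  have hy := Fin.val_add_one_sub (a := a) (b := b) (by omega)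
  rw [doubleStar, SimpleGraph.fromRel_adj] at huv
  rw [inArc_rev_iff a b, inArc_rev_iff a b, InArc, InArc] at huv
  rcases huv with ⟨-, (⟨hu, rfl⟩ | ⟨hu, rfl⟩) | (⟨hv, rfl⟩ | ⟨hv, rfl⟩)⟩
  · exact ⟨u, b + 1, rfl, by omega⟩
  · exact ⟨a + 1, u, Sym2.eq_swap, by omega⟩
  · exact ⟨v, b + 1, Sym2.eq_swap, by omega⟩
  · exact ⟨a + 1, v, rfl, by omega⟩

theorem cross_of_mem_edgeSet_doubleStar {a b : Fin n} (hab : IsDiagonal n s(a, b))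
    {e : Sym2 (Fin n)} (he : e ∈ (doubleStar a b).edgeSet) : Cross n s(a, b) e := by
  induction e using Sym2.ind with | _ u v =>
  obtain ⟨w, z, hwz, hw⟩ := doubleStar_adj_offsets hab he
  have := (z - a).isLt
  rw [hwz]
  simp only [cross_mk_iff, inArc_iff_cyclicallyBetween a, sub_self, Fin.val_zero,
    CyclicallyBetween]
  omega

theorem not_cross_of_mem_edgeSet_doubleStar {a b : Fin n} (hab : IsDiagonal n s(a, b))
    {e f : Sym2 (Fin n)} (he : e ∈ (doubleStar a b).edgeSet)
    (hf : f ∈ (doubleStar a b).edgeSet) : ¬ Cross n e f := by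
  induction e using Sym2.ind with | _ u v =>
  induction f using Sym2.ind with | _ u' v' =>
  obtain ⟨w, z, hwz, hw⟩ := doubleStar_adj_offsets hab he
  obtain ⟨w', z', hwz', hw'⟩ := doubleStar_adj_offsets hab hf
  rw [hwz, hwz']
  simp only [cross_mk_iff, inArc_iff_cyclicallyBetween a, CyclicallyBetween]
  omega

theorem edge_le_doubleStar {a b : Fin n} (hab : IsDiagonal n s(a, b)) :
    SimpleGraph.edge (a + 1) (b + 1) ≤ doubleStar a b := by
  obtain ⟨h2, hn⟩ := hab.two_le_val_sub
  have hx := Fin.val_add_one_sub_self a (by omega)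
  intro u v huv
  rw [SimpleGraph.edge_adj] at huv
  rw [doubleStar, SimpleGraph.fromRel_adj]
  rcases huv with ⟨⟨rfl, rfl⟩ | ⟨rfl, rfl⟩, hne⟩
  · exact ⟨hne, .inl (.inl ⟨⟨by omega, by omega⟩, rfl⟩)⟩
  · exact ⟨hne, .inr (.inl ⟨⟨by omega, by omega⟩, rfl⟩)⟩

def redStar (R : Set (Fin n)) (a b : Fin n) : SimpleGraph (Fin n) :=
  SimpleGraph.fromRel fun u v ↦
    u ∈ R ∧ u ≠ a + 1 ∧ u ≠ b + 1 ∧ v = if (u - a).val < (b - a).val then b + 1 else a + 1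

theorem redStar_le_doubleStar {a b : Fin n} (hab : IsDiagonal n s(a, b)) {R : Set (Fin n)}
    (ha : a ∉ R) (hb : b ∉ R) : redStar R a b ≤ doubleStar a b := by
  obtain ⟨h2, -⟩ := hab.two_le_val_sub
  have hoff : ∀ u ∈ R, (u - a).val ≠ 0 ∧ (u - a).val ≠ (b - a).val := fun u hu ↦
    ⟨fun h ↦ ha (by rwa [← sub_eq_zero.mp (Fin.ext h)]),
      fun h ↦ hb (by rwa [← sub_left_inj.mp (Fin.ext h)])⟩
  have hstar : ∀ u v, u ∈ R → v = (if (u - a).val < (b - a).val then b + 1 else a + 1) →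
      InArc n a b u ∧ v = b + 1 ∨ InArc n b a u ∧ v = a + 1 := by
    intro u v hu rfl
    obtain ⟨h0, hd⟩ := hoff u hu
    rw [InArc, inArc_rev_iff]
    split_ifs with h
    · exact .inl ⟨⟨by omega, h⟩, rfl⟩
    · exact .inr ⟨⟨by omega, by omega⟩, rfl⟩
  intro u v huv
  rw [redStar, SimpleGraph.fromRel_adj] at huv
  rw [doubleStar, SimpleGraph.fromRel_adj]
  rcases huv with ⟨hne, ⟨hu, -, -, hv⟩ | ⟨hv, -, -, hu⟩⟩
  · exact ⟨hne, .inl (hstar u v hu hv)⟩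
  · exact ⟨hne, .inr (hstar v u hv hu)⟩

theorem not_redStar_adj (R : Set (Fin n)) (a b : Fin n) :
    ¬ (redStar R a b).Adj (a + 1) (b + 1) := by
  simp [redStar]

theorem mem_iff_odd_ncard_neighborSet_redStar {R : Set (Fin n)} {a b v : Fin n}
    (hx : v ≠ a + 1) (hy : v ≠ b + 1) :
    v ∈ R ↔ Odd ((redStar R a b).neighborSet v).ncard := by
  set p := if (v - a).val < (b - a).val then b + 1 else a + 1
  have hpv : v ≠ p := by unfold p; split_ifs <;> assumption
  have hnbr : (redStar R a b).neighborSet v = {u | v ∈ R ∧ u = p} := by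
    ext u
    simp only [SimpleGraph.mem_neighborSet, redStar, SimpleGraph.fromRel_adj, Set.mem_ofPred_eq]
    constructor
    · rintro ⟨-, ⟨hv, -, -, rfl⟩ | ⟨-, -, -, rfl⟩⟩
      · exact ⟨hv, rfl⟩
      · split_ifs at hx hy <;> contradiction
    · rintro ⟨hv, rfl⟩
      exact ⟨hpv, .inl ⟨hv, hx, hy, rfl⟩⟩
  by_cases hv : v ∈ R <;> simp [hnbr, hv]

theorem exists_le_doubleStar_odd_ncard_neighborSet_iff {a b : Fin n}
    (hab : IsDiagonal n s(a, b)) {R : Set (Fin n)} (ha : a ∉ R) (hb : b ∉ R) (hR : Even R.ncard) :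
    ∃ H ≤ doubleStar a b, ∀ v, v ∈ R ↔ Odd (H.neighborSet v).ncard := by
  obtain ⟨h2, -⟩ := hab.two_le_val_sub
  have hxy : a + 1 ≠ b + 1 := fun h ↦ by
    rw [add_left_inj] at h; subst h; simp at h2
  obtain ⟨H, hle, hH⟩ := SimpleGraph.exists_le_sup_edge_odd_ncard_neighborSet_iff hR hxy
    (not_redStar_adj R a b) fun v hx hy ↦ mem_iff_odd_ncard_neighborSet_redStar hx hy
  exact ⟨H, hle.trans (sup_le (redStar_le_doubleStar hab ha hb) (edge_le_doubleStar hab)), hH⟩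

end Polygon

/-- Let `G` be a maximal outerplane graph on `Fin n` with red vertex set
`R` of even cardinality.  If `G` contains a blue diagonal, then `G` is augmentable to
meet `R`. -/
theorem stmt_9 (n : ℕ) (G : SimpleGraph (Fin n)) (hG : IsMOP n G)
    (R : Set (Fin n)) (hR : Even R.ncard)
    (hblue : HasBlueDiagonal n G R) :
    Augmentable n G R := by
  obtain ⟨e, heG, hdiag, hblue⟩ := hblue
  induction e using Sym2.ind with | _ a b =>
  have : NeZero n := ⟨a.pos.ne'⟩
  obtain ⟨H, hHK, hHR⟩ := exists_le_doubleStar_odd_ncard_neighborSet_iff hdiag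
    (hblue a (Sym2.mem_mk_left a b)) (hblue b (Sym2.mem_mk_right a b)) hR
  obtain ⟨-, -, -, hGcross, -⟩ := hG
  refine ⟨H, fun e he heG' ↦ ?_, fun e he f hf ↦ ?_, hHR⟩
  · exact hGcross _ heG _ heG' <|
      cross_of_mem_edgeSet_doubleStar hdiag (SimpleGraph.edgeSet_mono hHK he)
  · exact not_cross_of_mem_edgeSet_doubleStar hdiag (SimpleGraph.edgeSet_mono hHK he)
      (SimpleGraph.edgeSet_mono hHK hf)
end
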